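/- For all integers N ≥ 2, K ≥ 1, every (N,K) PIR scheme with download cost β satisfies β ≥ β₀ = Σ_{i=1}^{K} N^{-i}; equivalently, Σ_{n=1}^N H(A_n^[1] | Q_1^[1], …, Q_N^[1]) ≥ L·Σ_{i=1}^{K} N^{1-i}. (Proposition 1(ii), download part; the PIR capacity converse.) -/

import Mathlib

/- Shannon entropy framework for finitely-valued random variables on a finite
probability space, and the definition of an (N,K) private information retrieval
(PIR) scheme. -/

open scoped Classical
open Finset

/-- `prob p X a` is the probability that the random variable `X` takes the value `a`,
where `p` is the probability mass function on the finite sample space `Ω`. -/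
noncomputable def prob {Ω α : Type} [Fintype Ω] (p : Ω → ℝ) (X : Ω → α) (a : α) : ℝ :=
  ∑ ω : Ω, if X ω = a then p ω else 0

/-- Shannon entropy (natural base) of a random variable `X` on a finite sample space. -/
noncomputable def ent {Ω α : Type} [Fintype Ω] (p : Ω → ℝ) (X : Ω → α) : ℝ :=
  ∑ a ∈ Finset.univ.image X, Real.negMulLog (prob p X a)

/-- Conditional Shannon entropy `H(X | Y) = H(X, Y) - H(Y)`. -/
noncomputable def condEnt {Ω α β : Type} [Fintype Ω] (p : Ω → ℝ) (X : Ω → α) (Y : Ω → β) : ℝ :=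
  ent p (fun ω => (X ω, Y ω)) - ent p Y

/-- An `(N, K)` private information retrieval scheme:
`K` mutually independent messages `W` with entropy `L` each, stored contents `S` at `N`
servers (deterministic functions of the messages), a random key `F` independent of the
messages, queries `Q` (deterministic functions of `F`), answers `A` (deterministic
functions of the query and the stored content, with an answer function not depending on
the desired index), correctness and privacy. Messages/servers are indexed `0, …, K-1`
and `0, …, N-1` (paper index `i` corresponds to index `i - 1` here). -/
structure PIRScheme (N K : ℕ) where
  Ω : Type
  [finΩ : Fintype Ω]
  Msg : Type
  Sto : Type
  Qry : Type
  Ans : Type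
  Key : Type
  p : Ω → ℝ
  p_nonneg : ∀ ω, 0 ≤ p ω
  p_sum : ∑ ω : Ω, p ω = 1
  L : ℝ
  L_pos : 0 < L
  W : Fin K → Ω → Msg
  S : Fin N → Ω → Sto
  F : Ω → Key
  Q : Fin K → Fin N → Ω → Qry
  A : Fin K → Fin N → Ω → Ans
  W_indep : ∀ w : Fin K → Msg,
    prob p (fun ω => (fun k => W k ω)) w = ∏ k : Fin K, prob p (W k) (w k)
  W_ent : ∀ k, ent p (W k) = L
  F_indep : ∀ (f : Key) (w : Fin K → Msg),
    prob p (fun ω => (F ω, fun k => W k ω)) (f, w)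
      = prob p F f * prob p (fun ω => (fun k => W k ω)) w
  S_det : ∀ n : Fin N, ∃ g : (Fin K → Msg) → Sto, ∀ ω, S n ω = g (fun k => W k ω)
  Q_det : ∀ (k : Fin K) (n : Fin N), ∃ g : Key → Qry, ∀ ω, Q k n ω = g (F ω)
  A_det : ∀ n : Fin N, ∃ φ : Qry → Sto → Ans, ∀ (k : Fin K) (ω : Ω), A k n ω = φ (Q k n ω) (S n ω)
  correct : ∀ k : Fin K, ∃ g : (Fin N → Ans) → (Fin N → Qry) → Msg,
    ∀ ω, W k ω = g (fun n => A k n ω) (fun n => Q k n ω)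
  privacy : ∀ (n : Fin N) (k k' : Fin K) (q : Qry),
    prob p (Q k n) q = prob p (Q k' n) q

attribute [instance] PIRScheme.finΩ

/-- The set of server (or message) indices `{i : i < m}`, i.e. paper indices `1, …, m`. -/
def finLt (N m : ℕ) : Finset (Fin N) := Finset.univ.filter (fun i => i.val < m)

/-- The set of server (or message) indices `{i : m ≤ i}`, i.e. paper indices `m+1, …, N`. -/
def finGe (N m : ℕ) : Finset (Fin N) := Finset.univ.filter (fun i => m ≤ i.val)

namespace PIRScheme

variable {N K : ℕ}

/-- Informational normalized storage cost `α = (1/(N L)) ∑ₙ H(Sₙ)`. -/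
noncomputable def alpha (s : PIRScheme N K) : ℝ :=
  (1 / (N * s.L)) * ∑ n : Fin N, ent s.p (s.S n)

/-- Informational normalized download cost for desired message `k`:
`(1/(N L)) ∑ₙ H(Aₙ^[k] | Q₁^[k], …, Q_N^[k])`.  The download cost `β` of the scheme is
`betaAt` at the first message. -/
noncomputable def betaAt (s : PIRScheme N K) (k : Fin K) : ℝ :=
  (1 / (N * s.L)) *
    ∑ n : Fin N, condEnt s.p (s.A k n) (fun ω => (fun n' : Fin N => s.Q k n' ω))

/-- The joint random variable `S_B = (Sₙ : n ∈ B)`. -/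
noncomputable def jointS (s : PIRScheme N K) (B : Finset (Fin N)) : s.Ω → (B → s.Sto) :=
  fun ω i => s.S i.1 ω

/-- The joint random variable `A_B^[k] = (Aₙ^[k] : n ∈ B)`. -/
noncomputable def jointA (s : PIRScheme N K) (k : Fin K) (B : Finset (Fin N)) :
    s.Ω → (B → s.Ans) :=
  fun ω i => s.A k i.1 ω

/-- The joint random variable `W_C = (Wₖ : k ∈ C)`. -/
noncomputable def jointW (s : PIRScheme N K) (C : Finset (Fin K)) : s.Ω → (C → s.Msg) :=
  fun ω i => s.W i.1 ω

/-- A scheme is symmetric if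
`H(S_A, A_B^[k] | F, W_C) = H(S_{π(A)}, A_{π(B)}^[π'(k)] | F, W_{π'(C)})` for all
permutations `π` of the servers and `π'` of the messages. -/
def Symmetric (s : PIRScheme N K) : Prop :=
  ∀ (A B : Finset (Fin N)) (C : Finset (Fin K)) (k : Fin K)
    (π : Equiv.Perm (Fin N)) (π' : Equiv.Perm (Fin K)),
    condEnt s.p (fun ω => (s.jointS A ω, s.jointA k B ω)) (fun ω => (s.F ω, s.jointW C ω))
      = condEnt s.p (fun ω => (s.jointS (A.image ⇑π) ω, s.jointA (π' k) (B.image ⇑π) ω))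
          (fun ω => (s.F ω, s.jointW (C.image ⇑π') ω))

end PIRScheme

/-!
Sun–Jafar converse. Write `D(k, C) = ∑ₙ H(Aₙ^[k] | F, W_C)`. For `k ∉ C`, correctness lets the
answers for `k` and the key decode `W_k`, which keeps entropy `L` given `F` and `W_C` by
independence; what remains, `H(A^[k] | F, W_{C ∪ {k}})`, dominates every single
`H(Aₙ^[k] | F, W_{C ∪ {k}})`, and by privacy this does not change when `k` is replaced by any
`k'`. Hence `D(k, C) ≥ L + D(k', C ∪ {k}) / N`, and iterating along `K` distinct messages gives
`D(k, ∅) ≥ L ∑_{i<K} N^{-i}`.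
-/

section Entropy

variable {Ω α β γ : Type} [Fintype Ω] {p : Ω → ℝ}

lemma prob_nonneg (hp0 : ∀ ω, 0 ≤ p ω) (X : Ω → α) (a : α) : 0 ≤ prob p X a :=
  Finset.sum_nonneg fun ω _ => by split_ifs <;> simp [hp0 ω]

lemma le_prob_apply (hp0 : ∀ ω, 0 ≤ p ω) (X : Ω → α) (ω : Ω) : p ω ≤ prob p X (X ω) := by
  unfold prob
  simpa using Finset.single_le_sum (f := fun ω' => if X ω' = X ω then p ω' else 0)
    (fun ω' _ => by split_ifs <;> simp [hp0 ω']) (Finset.mem_univ ω)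

lemma prob_congr {X : Ω → α} {Y : Ω → β} {a : α} {b : β} (h : ∀ ω, X ω = a ↔ Y ω = b) :
    prob p X a = prob p Y b := by
  simp only [prob, h]

lemma prob_mono (hp0 : ∀ ω, 0 ≤ p ω) {X : Ω → α} {Y : Ω → β} {a : α} {b : β}
    (h : ∀ ω, X ω = a → Y ω = b) : prob p X a ≤ prob p Y b :=
  Finset.sum_le_sum fun ω _ => by
    by_cases hX : X ω = a
    · simp [hX, h ω hX]
    · split_ifs <;> simp [hp0 ω]

lemma sum_prob_mul {X : Ω → α} {S : Finset α} (hS : ∀ ω, X ω ∈ S) (f : α → ℝ) :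
    ∑ a ∈ S, prob p X a * f a = ∑ ω, p ω * f (X ω) := by
  simp only [prob, Finset.sum_mul, ite_mul, zero_mul]
  rw [Finset.sum_comm]
  exact Finset.sum_congr rfl fun ω _ => by simp [hS ω]

lemma sum_mul_comp_eq_of_prob_eq {X Y : Ω → α} (h : ∀ a, prob p X a = prob p Y a)
    (g : α → ℝ) : ∑ ω, p ω * g (X ω) = ∑ ω, p ω * g (Y ω) := by
  rw [← sum_prob_mul (S := univ.image X ∪ univ.image Y) (by simp) g,
    ← sum_prob_mul (S := univ.image X ∪ univ.image Y) (by simp) g]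
  simp only [h]

lemma sum_prob_pair_left (Y : Ω → β) (Z : Ω → γ) (z : γ) :
    ∑ b ∈ univ.image Y, prob p (fun ω => (Y ω, Z ω)) (b, z) = prob p Z z := by
  -- the joint law at `(b, z)` is the law of `Y` under `p` restricted to `{Z = z}`
  have h := sum_prob_mul (p := fun ω => if Z ω = z then p ω else 0) (X := Y)
    (S := univ.image Y) (by simp) fun _ => 1
  simp only [mul_one] at h
  simpa only [prob, Prod.mk.injEq, ite_and] using h

lemma ent_eq_sum (X : Ω → α) : ent p X = ∑ ω, p ω * -Real.log (prob p X (X ω)) := by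
  rw [ent, ← sum_prob_mul (S := univ.image X) (by simp) fun a => -Real.log (prob p X a)]
  simp only [Real.negMulLog, neg_mul, mul_neg]

lemma ent_le_of_determines (hp0 : ∀ ω, 0 ≤ p ω) {X : Ω → α} {Y : Ω → β}
    (h : ∀ ω₁ ω₂, X ω₁ = X ω₂ → Y ω₁ = Y ω₂) : ent p Y ≤ ent p X := by
  rw [ent_eq_sum, ent_eq_sum]
  refine Finset.sum_le_sum fun ω _ => ?_
  rcases (hp0 ω).eq_or_lt with h0 | h0
  · simp [← h0]
  have hX : 0 < prob p X (X ω) := h0.trans_le (le_prob_apply hp0 X ω)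
  have hXY : prob p X (X ω) ≤ prob p Y (Y ω) := prob_mono hp0 fun ω' h' => h ω' ω h'
  gcongr

lemma ent_congr (hp0 : ∀ ω, 0 ≤ p ω) {X : Ω → α} {Y : Ω → β}
    (h : ∀ ω₁ ω₂, X ω₁ = X ω₂ ↔ Y ω₁ = Y ω₂) : ent p X = ent p Y :=
  (ent_le_of_determines hp0 fun ω₁ ω₂ => (h ω₁ ω₂).2).antisymm
    (ent_le_of_determines hp0 fun ω₁ ω₂ => (h ω₁ ω₂).1)

/-- Gibbs' inequality. -/
theorem ent_le_sum_mul_neg_log [DecidableEq α] (hp0 : ∀ ω, 0 ≤ p ω) (hp1 : ∑ ω, p ω = 1)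
    {T : Ω → α} {q : α → ℝ} (hq0 : ∀ a, 0 ≤ q a) (hq : ∀ ω, 0 < p ω → 0 < q (T ω))
    (hq1 : ∑ a ∈ univ.image T, q a ≤ 1) :
    ent p T ≤ ∑ ω, p ω * -Real.log (q (T ω)) := by
  have hpt : ∀ ω, p ω * -Real.log (prob p T (T ω)) - p ω * -Real.log (q (T ω))
      ≤ p ω * (q (T ω) / prob p T (T ω)) - p ω := by
    intro ω
    rcases (hp0 ω).eq_or_lt with h0 | h0
    · simp [← h0]
    have hP : 0 < prob p T (T ω) := h0.trans_le (le_prob_apply hp0 T ω)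
    have hlog := Real.log_le_sub_one_of_pos (div_pos (hq ω h0) hP)
    rw [Real.log_div (hq ω h0).ne' hP.ne'] at hlog
    nlinarith [mul_le_mul_of_nonneg_left hlog h0.le]
  have hratio : ∑ ω, p ω * (q (T ω) / prob p T (T ω)) ≤ 1 := by
    rw [← sum_prob_mul (S := univ.image T) (by simp) fun a => q a / prob p T a]
    refine (Finset.sum_le_sum fun a _ => ?_).trans hq1
    rcases (prob_nonneg hp0 T a).eq_or_lt with h | h
    · simp [← h, hq0 a]
    · exact (mul_div_cancel₀ (q a) h.ne').le
  have hsum := Finset.sum_le_sum fun ω (_ : ω ∈ univ) => hpt ω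
  rw [Finset.sum_sub_distrib, Finset.sum_sub_distrib, hp1, ← ent_eq_sum] at hsum
  linarith

theorem condEnt_pair_le (hp0 : ∀ ω, 0 ≤ p ω) (hp1 : ∑ ω, p ω = 1)
    (X : Ω → α) (Y : Ω → β) (Z : Ω → γ) :
    condEnt p X (fun ω => (Y ω, Z ω)) ≤ condEnt p X Z := by
  set XZ := fun ω => (X ω, Z ω)
  set YZ := fun ω => (Y ω, Z ω)
  set T := fun ω => (XZ ω, Y ω)
  -- the law under which `X` and `Y` are conditionally independent given `Z`
  set q : (α × γ) × β → ℝ := fun t => prob p XZ t.1 * prob p YZ (t.2, t.1.2) / prob p Z t.1.2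
  have hq0 : ∀ t, 0 ≤ q t := fun t =>
    div_nonneg (mul_nonneg (prob_nonneg hp0 _ _) (prob_nonneg hp0 _ _)) (prob_nonneg hp0 _ _)
  have hq : ∀ ω, 0 < p ω → 0 < q (T ω) := fun ω h0 =>
    div_pos (mul_pos (h0.trans_le (le_prob_apply hp0 XZ ω))
      (h0.trans_le (le_prob_apply hp0 YZ ω))) (h0.trans_le (le_prob_apply hp0 Z ω))
  have hq1 : ∑ t ∈ univ.image T, q t ≤ 1 :=
    calc ∑ t ∈ univ.image T, q t ≤ ∑ t ∈ univ.image XZ ×ˢ univ.image Y, q t :=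
          Finset.sum_le_sum_of_subset_of_nonneg (by intro t; simp [T]; grind)
            fun t _ _ => hq0 t
      _ = ∑ xz ∈ univ.image XZ, prob p XZ xz * (prob p Z xz.2 / prob p Z xz.2) := by
          rw [Finset.sum_product]
          refine Finset.sum_congr rfl fun xz _ => ?_
          simp only [q, ← Finset.mul_sum, ← Finset.sum_div, YZ, sum_prob_pair_left]
          ring
      _ ≤ ∑ xz ∈ univ.image XZ, prob p XZ xz :=
          Finset.sum_le_sum fun xz _ =>
            mul_le_of_le_one_right (prob_nonneg hp0 _ _) (div_self_le_one _)
      _ = 1 := by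
          simpa [hp1] using sum_prob_mul (p := p) (X := XZ) (S := univ.image XZ) (by simp)
            fun _ => (1 : ℝ)
  have hsplit : ∑ ω, p ω * -Real.log (q (T ω)) = ent p XZ + ent p YZ - ent p Z := by
    rw [ent_eq_sum XZ, ent_eq_sum YZ, ent_eq_sum Z, ← Finset.sum_add_distrib,
      ← Finset.sum_sub_distrib]
    refine Finset.sum_congr rfl fun ω _ => ?_
    rcases (hp0 ω).eq_or_lt with h0 | h0
    · simp [← h0]
    have hxz := h0.trans_le (le_prob_apply hp0 XZ ω)
    have hyz := h0.trans_le (le_prob_apply hp0 YZ ω)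
    have hz := h0.trans_le (le_prob_apply hp0 Z ω)
    simp only [q, T]
    rw [Real.log_div (mul_pos hxz hyz).ne' hz.ne', Real.log_mul hxz.ne' hyz.ne']
    ring
  have hT : ent p (fun ω => (X ω, Y ω, Z ω)) = ent p T :=
    ent_congr hp0 fun ω₁ ω₂ => by simp [T, XZ]; tauto
  have := ent_le_sum_mul_neg_log hp0 hp1 hq0 hq hq1
  unfold condEnt
  linarith

lemma condEnt_nonneg (hp0 : ∀ ω, 0 ≤ p ω) (X : Ω → α) (Y : Ω → β) : 0 ≤ condEnt p X Y :=
  sub_nonneg.2 (ent_le_of_determines hp0 fun _ _ h => congrArg Prod.snd h)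

lemma condEnt_congr_left (hp0 : ∀ ω, 0 ≤ p ω) {X : Ω → α} {X' : Ω → β} {Z : Ω → γ}
    (h : ∀ ω₁ ω₂, X ω₁ = X ω₂ ↔ X' ω₁ = X' ω₂) : condEnt p X Z = condEnt p X' Z := by
  rw [condEnt, condEnt,
    ent_congr hp0 (Y := fun ω => (X' ω, Z ω)) fun ω₁ ω₂ => by simp only [Prod.mk.injEq, h]]

lemma condEnt_congr_right (hp0 : ∀ ω, 0 ≤ p ω) {X : Ω → α} {Y : Ω → β} {Z : Ω → γ}
    (h : ∀ ω₁ ω₂, Y ω₁ = Y ω₂ ↔ Z ω₁ = Z ω₂) : condEnt p X Y = condEnt p X Z := by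
  rw [condEnt, condEnt, ent_congr hp0 h,
    ent_congr hp0 (Y := fun ω => (X ω, Z ω)) fun ω₁ ω₂ => by simp only [Prod.mk.injEq, h]]

lemma condEnt_pair_eq_add (hp0 : ∀ ω, 0 ≤ p ω) (X : Ω → α) (Y : Ω → β) (Z : Ω → γ) :
    condEnt p (fun ω => (X ω, Y ω)) Z
      = condEnt p X (fun ω => (Y ω, Z ω)) + condEnt p Y Z := by
  have : ent p (fun ω => ((X ω, Y ω), Z ω)) = ent p (fun ω => (X ω, Y ω, Z ω)) :=
    ent_congr hp0 fun ω₁ ω₂ => by simp only [Prod.mk.injEq, and_assoc]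
  rw [condEnt, condEnt, condEnt, this]
  ring

lemma condEnt_eq_add_of_determines (hp0 : ∀ ω, 0 ≤ p ω) {X : Ω → α} {Y : Ω → β}
    {Z : Ω → γ} {g : α → γ → β} (hY : ∀ ω, Y ω = g (X ω) (Z ω)) :
    condEnt p X Z = condEnt p Y Z + condEnt p X (fun ω => (Y ω, Z ω)) := by
  have : ent p (fun ω => (X ω, Z ω)) = ent p (fun ω => ((X ω, Y ω), Z ω)) :=
    ent_congr hp0 fun ω₁ ω₂ => by
      simp only [Prod.mk.injEq, hY]
      constructor
      · rintro ⟨hX, hZ⟩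
        simp [hX, hZ]
      · tauto
  rw [condEnt, this, ← condEnt, condEnt_pair_eq_add hp0]
  ring

lemma condEnt_le_of_determines_left (hp0 : ∀ ω, 0 ≤ p ω) {X : Ω → α} {Y : Ω → β}
    (Z : Ω → γ) (h : ∀ ω₁ ω₂, X ω₁ = X ω₂ → Y ω₁ = Y ω₂) : condEnt p Y Z ≤ condEnt p X Z :=
  sub_le_sub_right (ent_le_of_determines hp0 fun ω₁ ω₂ hXZ => by
    simp only [Prod.mk.injEq] at hXZ ⊢
    exact ⟨h _ _ hXZ.1, hXZ.2⟩) _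

lemma condEnt_le_of_determines_right (hp0 : ∀ ω, 0 ≤ p ω) (hp1 : ∑ ω, p ω = 1) (X : Ω → α)
    {Y : Ω → β} {Z : Ω → γ} (h : ∀ ω₁ ω₂, Z ω₁ = Z ω₂ → Y ω₁ = Y ω₂) :
    condEnt p X Z ≤ condEnt p X Y :=
  calc condEnt p X Z = condEnt p X (fun ω => (Z ω, Y ω)) :=
        condEnt_congr_right hp0 fun ω₁ ω₂ => by
          simp only [Prod.mk.injEq]
          exact ⟨fun hZ => ⟨hZ, h _ _ hZ⟩, And.left⟩
    _ ≤ condEnt p X Y := condEnt_pair_le hp0 hp1 X Z Y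

lemma condEnt_const (hp0 : ∀ ω, 0 ≤ p ω) (hp1 : ∑ ω, p ω = 1) (X : Ω → α) (c : β) :
    condEnt p X (fun _ => c) = ent p X := by
  have hc : ent p (fun _ : Ω => c) = 0 := by simp [ent_eq_sum, prob, hp1]
  rw [condEnt, hc, sub_zero, ent_congr hp0 (Y := X) fun ω₁ ω₂ => by simp]

theorem condEnt_pi_le_sum (hp0 : ∀ ω, 0 ≤ p ω) (hp1 : ∑ ω, p ω = 1) {ι : Type}
    (X : ι → Ω → α) (Z : Ω → γ) (s : Finset ι) :
    condEnt p (fun ω (i : s) => X i ω) Z ≤ ∑ i ∈ s, condEnt p (X i) Z := by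
  induction s using Finset.induction_on with
  | empty =>
    rw [Finset.sum_empty, condEnt, ent_congr hp0 (Y := Z) fun ω₁ ω₂ => by simp [funext_iff]]
    simp
  | insert j s hj ih =>
    calc condEnt p (fun ω (i : ↥(insert j s)) => X i ω) Z
        = condEnt p (fun ω => (X j ω, fun i : s => X i ω)) Z :=
          condEnt_congr_left hp0 fun ω₁ ω₂ => by simp [funext_iff]
      _ = condEnt p (X j) (fun ω => (fun i : s => X i ω, Z ω))
            + condEnt p (fun ω (i : s) => X i ω) Z := condEnt_pair_eq_add hp0 _ _ _
      _ ≤ condEnt p (X j) Z + ∑ i ∈ s, condEnt p (X i) Z :=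
          add_le_add (condEnt_pair_le hp0 hp1 _ _ _) ih
      _ = ∑ i ∈ insert j s, condEnt p (X i) Z := by rw [Finset.sum_insert hj]

end Entropy

section Independence

variable {Ω α β γ δ : Type} [Fintype Ω] {p : Ω → ℝ}

def IndepRV (p : Ω → ℝ) (X : Ω → α) (Y : Ω → β) : Prop :=
  ∀ a b, prob p (fun ω => (X ω, Y ω)) (a, b) = prob p X a * prob p Y b

lemma prob_eq_sum_mul_ite (X : Ω → α) (a : α) :
    prob p X a = ∑ ω, p ω * if X ω = a then 1 else 0 := by
  simp [prob, mul_ite]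

variable {X : Ω → α} {Y : Ω → β}

theorem IndepRV.sum_mul_apply (h : IndepRV p X Y) (g : α → β → ℝ) :
    ∑ ω, p ω * g (X ω) (Y ω) = ∑ ω, p ω * ∑ ω', p ω' * g (X ω) (Y ω') := by
  rw [← sum_prob_mul (X := fun ω => (X ω, Y ω)) (S := univ.image X ×ˢ univ.image Y) (by simp)
      fun t => g t.1 t.2, Finset.sum_product,
    ← sum_prob_mul (X := X) (S := univ.image X) (by simp)
      fun a => ∑ ω', p ω' * g a (Y ω')]
  refine Finset.sum_congr rfl fun a _ => ?_
  rw [← sum_prob_mul (X := Y) (S := univ.image Y) (by simp), Finset.mul_sum]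
  refine Finset.sum_congr rfl fun b _ => ?_
  rw [h]
  ring

theorem IndepRV.comp (h : IndepRV p X Y) (f : α → γ) (g : β → δ) :
    IndepRV p (fun ω => f (X ω)) (fun ω => g (Y ω)) := by
  intro c d
  calc prob p (fun ω => (f (X ω), g (Y ω))) (c, d)
      = ∑ ω, p ω * ((if f (X ω) = c then 1 else 0) * (if g (Y ω) = d then 1 else 0)) := by
        refine Finset.sum_congr rfl fun ω _ => ?_
        simp only [Prod.mk.injEq]
        split_ifs <;> simp_all
    _ = ∑ ω, p ω * ∑ ω', p ω' *
          ((if f (X ω) = c then 1 else 0) * (if g (Y ω') = d then 1 else 0)) :=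
        h.sum_mul_apply fun a b => (if f a = c then 1 else 0) * (if g b = d then 1 else 0)
    _ = prob p (fun ω => f (X ω)) c * prob p (fun ω => g (Y ω)) d := by
        rw [prob_eq_sum_mul_ite, prob_eq_sum_mul_ite, Finset.sum_mul_sum]
        exact Finset.sum_congr rfl fun ω _ => by
          rw [Finset.mul_sum]
          exact Finset.sum_congr rfl fun ω' _ => by ring

lemma ent_eq_add_of_prob_eq_mul (hp0 : ∀ ω, 0 ≤ p ω) {Z : Ω → γ} {r : Ω → ℝ}
    (h : ∀ ω, 0 < p ω → prob p Z (Z ω) = prob p X (X ω) * r ω) :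
    ent p Z = ent p X + ∑ ω, p ω * -Real.log (r ω) := by
  rw [ent_eq_sum, ent_eq_sum, ← Finset.sum_add_distrib]
  refine Finset.sum_congr rfl fun ω _ => ?_
  rcases (hp0 ω).eq_or_lt with h0 | h0
  · simp [← h0]
  have hX := h0.trans_le (le_prob_apply hp0 X ω)
  have hZ := h0.trans_le (le_prob_apply hp0 Z ω)
  rw [h ω h0] at hZ ⊢
  rw [Real.log_mul hX.ne' (pos_of_mul_pos_right hZ hX.le).ne']
  ring

theorem IndepRV.condEnt_eq_sum (hp0 : ∀ ω, 0 ≤ p ω) (hp1 : ∑ ω, p ω = 1)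
    (hXY : IndepRV p X Y) (h : α → β → γ) (π : β → δ) :
    condEnt p (fun ω => h (X ω) (Y ω)) (fun ω => (X ω, π (Y ω)))
      = ∑ ω, p ω * condEnt p (fun ω' => h (X ω) (Y ω')) (fun ω' => π (Y ω')) := by
  have hjoint : ent p (fun ω => (h (X ω) (Y ω), X ω, π (Y ω)))
      = ent p X + ∑ ω, p ω * ent p (fun ω' => (h (X ω) (Y ω'), π (Y ω'))) := by
    rw [ent_eq_add_of_prob_eq_mul hp0 (X := X)
      (r := fun ω => prob p (fun ω' => (h (X ω) (Y ω'), π (Y ω'))) (h (X ω) (Y ω), π (Y ω)))]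
    · congr 1
      simp only [ent_eq_sum]
      exact hXY.sum_mul_apply fun x y =>
        -Real.log (prob p (fun ω' => (h x (Y ω'), π (Y ω'))) (h x y, π y))
    · intro ω _
      refine (prob_congr fun ω' => ?_).trans
        (hXY.comp (fun x => x) (fun y => (h (X ω) y, π y)) _ _)
      simp only [Prod.mk.injEq]
      constructor <;> rintro ⟨h1, h2, h3⟩ <;> simp_all
  have hcond : ent p (fun ω => (X ω, π (Y ω)))
      = ent p X + ∑ ω, p ω * ent p (fun ω' => π (Y ω')) := by
    rw [ent_eq_add_of_prob_eq_mul hp0 (X := X) (Z := fun ω => (X ω, π (Y ω)))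
      (r := fun ω => prob p (fun ω' => π (Y ω')) (π (Y ω)))
        fun ω _ => hXY.comp (fun x => x) π _ _,
      ← Finset.sum_mul, hp1, one_mul, ent_eq_sum fun ω => π (Y ω)]
  simp only [condEnt, hjoint, hcond, mul_sub, Finset.sum_sub_distrib]
  ring

lemma ent_pi_of_iIndep {ι : Type} [Fintype ι] (hp0 : ∀ ω, 0 ≤ p ω) (X : ι → Ω → α)
    (hX : ∀ x : ι → α, prob p (fun ω i => X i ω) x = ∏ i, prob p (X i) (x i)) :
    ent p (fun ω i => X i ω) = ∑ i, ent p (X i) := by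
  simp only [ent_eq_sum]
  rw [Finset.sum_comm]
  refine Finset.sum_congr rfl fun ω _ => ?_
  rcases (hp0 ω).eq_or_lt with h0 | h0
  · simp [← h0]
  have hpos := h0.trans_le (le_prob_apply hp0 (fun ω i => X i ω) ω)
  rw [hX] at hpos ⊢
  have hne : ∀ i ∈ univ, prob p (X i) (X i ω) ≠ 0 := fun i _ h =>
    hpos.ne' (Finset.prod_eq_zero (Finset.mem_univ i) h)
  rw [Real.log_prod hne, ← Finset.mul_sum, ← Finset.sum_neg_distrib]

theorem ent_le_condEnt_of_iIndep {ι : Type} [Fintype ι] [DecidableEq ι]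
    (hp0 : ∀ ω, 0 ≤ p ω) (hp1 : ∑ ω, p ω = 1) (X : ι → Ω → α)
    (hX : ∀ x : ι → α, prob p (fun ω i => X i ω) x = ∏ i, prob p (X i) (x i)) (k : ι) :
    ent p (X k) ≤ condEnt p (X k) (fun ω (i : univ.erase k) => X i ω) := by
  have hall : ent p (fun ω i => X i ω) = ent p (X k) + ∑ i ∈ univ.erase k, ent p (X i) := by
    rw [ent_pi_of_iIndep hp0 X hX, ← Finset.add_sum_erase _ _ (Finset.mem_univ k)]
  have hsplit : ent p (fun ω => (X k ω, fun i : univ.erase k => X i ω))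
      = ent p (fun ω i => X i ω) :=
    ent_congr hp0 fun ω₁ ω₂ => by
      simp only [Prod.mk.injEq, funext_iff, Subtype.forall, Finset.mem_erase, Finset.mem_univ,
        and_true]
      exact ⟨fun h i => if hi : i = k then hi ▸ h.1 else h.2 i hi, fun h => ⟨h k, fun i _ => h i⟩⟩
  have hrest : ent p (fun ω (i : univ.erase k) => X i ω) ≤ ∑ i ∈ univ.erase k, ent p (X i) := by
    simpa only [condEnt_const hp0 hp1] using
      condEnt_pi_le_sum hp0 hp1 X (fun _ => ()) (univ.erase k)
  rw [condEnt]
  linarith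

end Independence

lemma sum_Icc_one_pow_eq_mul_geom_sum {R : Type} [CommSemiring R] (x : R) (n : ℕ) :
    ∑ i ∈ Finset.Icc 1 n, x ^ i = x * ∑ i ∈ range n, x ^ i := by
  induction n with
  | zero => simp
  | succ n ih =>
    rw [Finset.sum_Icc_succ_top (by omega), ih, geom_sum_succ', mul_add, pow_succ']
    ring

namespace PIRScheme

variable {N K : ℕ} (s : PIRScheme N K)

lemma indepRV_key_messages : IndepRV s.p s.F fun ω k => s.W k ω := s.F_indep

lemma L_le_condEnt_W {k : Fin K} {C : Finset (Fin K)} (hk : k ∉ C) :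
    s.L ≤ condEnt s.p (s.W k) (fun ω => (s.F ω, s.jointW C ω)) := by
  have havg := s.indepRV_key_messages.condEnt_eq_sum s.p_nonneg s.p_sum
    (fun _ w => w k) (fun w (i : C) => w i)
  rw [← Finset.sum_mul, s.p_sum, one_mul] at havg
  calc s.L = ent s.p (s.W k) := (s.W_ent k).symm
    _ ≤ condEnt s.p (s.W k) (s.jointW (univ.erase k)) :=
        ent_le_condEnt_of_iIndep s.p_nonneg s.p_sum s.W s.W_indep k
    _ ≤ condEnt s.p (s.W k) (s.jointW C) :=
        condEnt_le_of_determines_right s.p_nonneg s.p_sum _ fun ω₁ ω₂ h => funext fun i =>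
          congrFun h ⟨i, Finset.mem_erase.2 ⟨fun hi => hk (hi ▸ i.2), Finset.mem_univ _⟩⟩
    _ = _ := havg.symm

lemma condEnt_A_eq (n : Fin N) (C : Finset (Fin K)) (k k' : Fin K) :
    condEnt s.p (s.A k n) (fun ω => (s.F ω, s.jointW C ω))
      = condEnt s.p (s.A k' n) (fun ω => (s.F ω, s.jointW C ω)) := by
  obtain ⟨φ, hφ⟩ := s.A_det n
  obtain ⟨gS, hS⟩ := s.S_det n
  -- given the key, the answer is the query applied to messages independent of the key, so only
  -- the law of the query matters, and privacy makes it independent of `k`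
  have hquery : ∀ k, condEnt s.p (s.A k n) (fun ω => (s.F ω, s.jointW C ω))
      = ∑ ω, s.p ω * condEnt s.p (fun ω' => φ (s.Q k n ω) (s.S n ω')) (s.jointW C) := by
    intro k
    obtain ⟨gQ, hQ⟩ := s.Q_det k n
    have hA : s.A k n = fun ω => φ (gQ (s.F ω)) (gS fun k => s.W k ω) :=
      funext fun ω => by rw [hφ, hQ, hS]
    simp only [hA, hQ, hS]
    exact s.indepRV_key_messages.condEnt_eq_sum s.p_nonneg s.p_sum
      (fun f w => φ (gQ f) (gS w)) fun w (i : C) => w i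
  rw [hquery k, hquery k']
  exact sum_mul_comp_eq_of_prob_eq (s.privacy n k k')
    fun q => condEnt s.p (fun ω' => φ q (s.S n ω')) (s.jointW C)

noncomputable def condDownload (k : Fin K) (C : Finset (Fin K)) : ℝ :=
  ∑ n, condEnt s.p (s.A k n) (fun ω => (s.F ω, s.jointW C ω))

lemma condDownload_nonneg (k : Fin K) (C : Finset (Fin K)) : 0 ≤ s.condDownload k C :=
  Finset.sum_nonneg fun _ _ => condEnt_nonneg s.p_nonneg _ _

theorem L_add_inv_mul_condDownload_le {k : Fin K} {C : Finset (Fin K)} (hk : k ∉ C)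
    (k' : Fin K) :
    s.L + (N : ℝ)⁻¹ * s.condDownload k' (insert k C) ≤ s.condDownload k C := by
  set Z := fun ω => (s.F ω, s.jointW C ω)
  set Z' := fun ω => (s.F ω, s.jointW (insert k C) ω)
  set answers := s.jointA k univ
  have hdecode : condEnt s.p answers Z = condEnt s.p (s.W k) Z + condEnt s.p answers Z' := by
    obtain ⟨dec, hdec⟩ := s.correct k
    choose gQ hgQ using s.Q_det k
    rw [condEnt_eq_add_of_determines s.p_nonneg (Y := s.W k)
      (g := fun a z => dec (fun n => a ⟨n, Finset.mem_univ n⟩) fun n => gQ n z.1)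
      fun ω => by rw [hdec ω]; simp only [hgQ]; rfl]
    congr 1
    refine condEnt_congr_right s.p_nonneg fun ω₁ ω₂ => ?_
    simp only [Z, Z', jointW, Prod.mk.injEq, funext_iff, Subtype.forall,
      Finset.forall_mem_insert]
    tauto
  have hT : (N : ℝ)⁻¹ * s.condDownload k' (insert k C) ≤ condEnt s.p answers Z' := by
    have hle : s.condDownload k' (insert k C) ≤ N * condEnt s.p answers Z' :=
      calc s.condDownload k' (insert k C) = ∑ n, condEnt s.p (s.A k n) Z' :=
            Finset.sum_congr rfl fun n _ => s.condEnt_A_eq n _ k' k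
        _ ≤ ∑ _n : Fin N, condEnt s.p answers Z' :=
            Finset.sum_le_sum fun n _ => condEnt_le_of_determines_left s.p_nonneg Z'
              fun ω₁ ω₂ h => congrFun h ⟨n, Finset.mem_univ n⟩
        _ = N * condEnt s.p answers Z' := by simp
    exact inv_mul_le_of_le_mul₀ (Nat.cast_nonneg N) (condEnt_nonneg s.p_nonneg _ _) hle
  calc s.L + (N : ℝ)⁻¹ * s.condDownload k' (insert k C)
      ≤ condEnt s.p (s.W k) Z + condEnt s.p answers Z' :=
        add_le_add (s.L_le_condEnt_W hk) hT
    _ = condEnt s.p answers Z := hdecode.symm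
    _ ≤ s.condDownload k C := condEnt_pi_le_sum s.p_nonneg s.p_sum (fun n => s.A k n) Z univ

theorem L_mul_geom_sum_le_condDownload (m : ℕ) :
    ∀ (C : Finset (Fin K)) (k : Fin K), k ∉ C → C.card + m < K →
      s.L * ∑ i ∈ range (m + 1), ((N : ℝ)⁻¹) ^ i ≤ s.condDownload k C := by
  induction m with
  | zero =>
    intro C k hk _
    have hstep := s.L_add_inv_mul_condDownload_le hk k
    have hrest := mul_nonneg (inv_nonneg.2 (Nat.cast_nonneg N : (0 : ℝ) ≤ N))
      (s.condDownload_nonneg k (insert k C))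
    simp only [zero_add, Finset.sum_range_one, pow_zero, mul_one]
    linarith
  | succ m ih =>
    intro C k hk hcard
    obtain ⟨k', -, hk'⟩ := Finset.exists_mem_notMem_of_card_lt_card
      (s := insert k C) (t := univ) (by simp [Finset.card_insert_of_notMem hk]; omega)
    have hrest := ih (insert k C) k' hk' (by rw [Finset.card_insert_of_notMem hk]; omega)
    calc s.L * ∑ i ∈ range (m + 2), ((N : ℝ)⁻¹) ^ i
        = s.L + (N : ℝ)⁻¹ * (s.L * ∑ i ∈ range (m + 1), ((N : ℝ)⁻¹) ^ i) := by
          rw [geom_sum_succ]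
          ring
      _ ≤ s.L + (N : ℝ)⁻¹ * s.condDownload k' (insert k C) := by gcongr
      _ ≤ s.condDownload k C := s.L_add_inv_mul_condDownload_le hk k'

lemma condDownload_empty_le (k : Fin K) :
    s.condDownload k ∅ ≤ ∑ n, condEnt s.p (s.A k n) (fun ω n' => s.Q k n' ω) := by
  choose gQ hgQ using s.Q_det k
  exact Finset.sum_le_sum fun n _ => condEnt_le_of_determines_right s.p_nonneg s.p_sum _
    fun ω₁ ω₂ h => funext fun n' => by rw [hgQ, hgQ, (Prod.mk.inj h).1]

end PIRScheme

/-- Proposition 1(ii), download part: every `(N,K)` PIR scheme satisfies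
`β ≥ β₀ = ∑_{i=1}^K N^{-i}`. -/
theorem stmt2 (N K : ℕ) (hK : 1 ≤ K) (s : PIRScheme N K) :
    ∑ i ∈ Finset.Icc 1 K, ((N : ℝ))⁻¹ ^ i ≤ s.betaAt ⟨0, by omega⟩ := by
  have hdownload := s.L_mul_geom_sum_le_condDownload (K - 1) ∅ ⟨0, by omega⟩
    (Finset.notMem_empty _) (by simp; omega)
  rw [Nat.sub_add_cancel hK] at hdownload
  calc ∑ i ∈ Finset.Icc 1 K, ((N : ℝ))⁻¹ ^ i
      = (N : ℝ)⁻¹ * (s.L⁻¹ * (s.L * ∑ i ∈ range K, ((N : ℝ))⁻¹ ^ i)) := by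
        rw [sum_Icc_one_pow_eq_mul_geom_sum, inv_mul_cancel_left₀ s.L_pos.ne']
    _ ≤ (N : ℝ)⁻¹ * (s.L⁻¹ * ∑ n, condEnt s.p (s.A ⟨0, by omega⟩ n)
          (fun ω n' => s.Q ⟨0, by omega⟩ n' ω)) := by
        have hL := s.L_pos
        gcongr
        exact hdownload.trans (s.condDownload_empty_le _)
    _ = s.betaAt ⟨0, by omega⟩ := by
        rw [PIRScheme.betaAt, one_div, mul_inv]
        ring
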